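/- Let p be an odd prime and n = p², m = ⌊n/2⌋. Then there exists a tuple (a_1,…,a_m) of rational numbers with Σ_{j=1}^m a_j sin(jπ/n) = 0 but Σ_{j=1}^m a_j ≠ 0 (an improper identity). -/

import Mathlib

/-!
The `p` angles `(1 + 2kp)π/p² = π/p² + k · 2π/p`, `0 ≤ k < p`, are equally spaced around the
circle, so their sines sum to zero. Folding each of them into `(0, π/2]` with `sin (π - x) = sin x`
and `sin (x + π) = -sin x` turns this into a rational relation among the `sin (jπ/p²)`,
`1 ≤ j ≤ ⌊p²/2⌋`, whose coefficients sum to the number of angles below `π` minus the number above,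
`(p + 1)/2 - (p - 1)/2 = 1`.
-/

open Finset Real

theorem Finset.sum_fiberwise_mul {ι κ R : Type*} [Fintype ι] [Fintype κ] [DecidableEq κ]
    [NonUnitalNonAssocSemiring R] (g : ι → κ) (c : ι → R) (f : κ → R) :
    ∑ j, (∑ i with g i = j, c i) * f j = ∑ i, c i * f (g i) := by
  rw [← sum_fiberwise univ g]
  refine sum_congr rfl fun j _ => ?_
  rw [sum_mul]
  refine sum_congr rfl fun i hi => ?_
  rw [(mem_filter.mp hi).2]

theorem Real.sum_range_sin_add_mul_two_pi_div {p : ℕ} (hp : 1 < p) (θ : ℝ) :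
    ∑ k ∈ range p, sin (θ + k * (2 * π / p)) = 0 := by
  set ω := Complex.exp (2 * π * Complex.I / p)
  have hω : IsPrimitiveRoot ω p := Complex.isPrimitiveRoot_exp p (by omega)
  have hexp (k : ℕ) :
      Complex.exp (↑(θ + k * (2 * π / p)) * Complex.I) = Complex.exp (θ * Complex.I) * ω ^ k := by
    rw [← Complex.exp_nat_mul, ← Complex.exp_add]
    push_cast
    ring_nf
  calc ∑ k ∈ range p, sin (θ + k * (2 * π / p))
      = (Complex.exp (θ * Complex.I) * ∑ k ∈ range p, ω ^ k).im := by
        simp only [mul_sum, ← hexp, Complex.im_sum, Complex.exp_ofReal_mul_I_im]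
    _ = 0 := by rw [hω.geom_sum_eq_zero hp, mul_zero, Complex.zero_im]

theorem Real.exists_sin_eq_sin_succ_mul_pi_div {n i : ℕ} (h0 : 0 < i) (hi : i < n) :
    ∃ t : Fin (n / 2), sin (i * π / n) = sin ((t.1 + 1) * π / n) := by
  have hn : (n : ℝ) ≠ 0 := by exact_mod_cast (by omega : n ≠ 0)
  by_cases hhalf : i ≤ n / 2
  · refine ⟨⟨i - 1, by omega⟩, ?_⟩
    rw [Nat.cast_pred h0, sub_add_cancel]
  · refine ⟨⟨n - i - 1, by omega⟩, ?_⟩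
    rw [Nat.cast_pred (by omega), sub_add_cancel, Nat.cast_sub hi.le, ← sin_pi_sub]
    congr 1
    field_simp

theorem Real.exists_sin_eq_sign_mul_sin {n j : ℕ} (h0 : 0 < j) (h2n : j < 2 * n) (hjn : j ≠ n) :
    ∃ t : Fin (n / 2),
      sin (j * π / n) = ((if j < n then 1 else -1 : ℚ) : ℝ) * sin ((t.1 + 1) * π / n) := by
  rcases lt_or_gt_of_ne hjn with hlt | hgt
  · simpa [hlt] using exists_sin_eq_sin_succ_mul_pi_div h0 hlt
  · obtain ⟨t, ht⟩ := exists_sin_eq_sin_succ_mul_pi_div (n := n) (i := j - n) (by omega) (by omega)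
    refine ⟨t, ?_⟩
    have hn : (n : ℝ) ≠ 0 := by exact_mod_cast (by omega : n ≠ 0)
    rw [if_neg (not_lt.mpr hgt.le), ← ht, Nat.cast_sub hgt.le, Rat.cast_neg, Rat.cast_one,
      neg_one_mul, ← sin_add_pi]
    congr 1
    field_simp
    ring

theorem Finset.sum_range_ite_two_mul_lt {R : Type*} [AddCommGroupWithOne R] {p : ℕ}
    (hp : Odd p) :
    ∑ k ∈ range p, (if 2 * k < p then (1 : R) else -1) = 1 := by
  obtain ⟨w, rfl⟩ := hp
  have hlow : {k ∈ range (2 * w + 1) | 2 * k < 2 * w + 1} = range (w + 1) := by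
    ext k; simp only [mem_filter, mem_range]; omega
  have hhigh : #{k ∈ range (2 * w + 1) | ¬2 * k < 2 * w + 1} = w := by
    rw [filter_not, hlow, card_sdiff_of_subset (range_subset_range.mpr (by omega)), card_range,
      card_range]
    omega
  rw [sum_ite, sum_const, sum_const, hlow, hhigh, card_range]
  simp [add_smul]

theorem Nat.one_add_two_mul_mul_lt_sq_iff {p k : ℕ} (hp : 1 < p) :
    1 + 2 * k * p < p ^ 2 ↔ 2 * k < p := by
  constructor
  · intro h
    by_contra! hk
    nlinarith
  · intro h
    nlinarith

theorem Nat.one_add_two_mul_mul_ne_sq {p k : ℕ} (hp : 1 < p) : 1 + 2 * k * p ≠ p ^ 2 := by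
  intro h
  have := congrArg (· % p) h
  simp [Nat.add_mul_mod_self_right, Nat.mod_eq_of_lt hp, pow_two] at this

/-- For `p` an odd prime and `n = p²`, `m = ⌊n/2⌋`, there is an improper
identity: a tuple `(a_1,…,a_m) ∈ ℚ^m` with `∑_{j=1}^m a_j sin (jπ/n) = 0`
but `∑_{j=1}^m a_j ≠ 0`. -/
theorem improper_identity_prime_sq (p : ℕ) (hp : p.Prime) (hodd : Odd p) :
    ∃ a : Fin (p ^ 2 / 2) → ℚ,
      (∑ j, (a j : ℝ) * Real.sin ((j.1 + 1) * Real.pi / (p ^ 2 : ℕ))) = 0 ∧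
      (∑ j, a j) ≠ 0 := by
  have hp1 := hp.one_lt
  have hfold (k : Fin p) : ∃ t : Fin (p ^ 2 / 2),
      sin (π / (p ^ 2 : ℕ) + k * (2 * π / p))
        = ((if 2 * k.1 < p then 1 else -1 : ℚ) : ℝ) * sin ((t.1 + 1) * π / (p ^ 2 : ℕ)) := by
    obtain ⟨t, ht⟩ := Real.exists_sin_eq_sign_mul_sin (n := p ^ 2) (j := 1 + 2 * k * p) (by omega)
      (by nlinarith [k.2]) (Nat.one_add_two_mul_mul_ne_sq hp1)
    simp only [Nat.one_add_two_mul_mul_lt_sq_iff hp1] at ht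
    refine ⟨t, ?_⟩
    rw [← ht]
    have hpR : (p : ℝ) ≠ 0 := by exact_mod_cast hp.ne_zero
    congr 1
    push_cast
    field_simp
  choose t ht using hfold
  refine ⟨fun j => ∑ k with t k = j, if 2 * k.1 < p then 1 else -1, ?_, ?_⟩
  · simp only [Rat.cast_sum]
    rw [sum_fiberwise_mul t]
    simp_rw [← ht]
    rw [Fin.sum_univ_eq_sum_range (fun k => sin (π / (p ^ 2 : ℕ) + k * (2 * π / p))) p,
      Real.sum_range_sin_add_mul_two_pi_div hp1]
  · rw [sum_fiberwise, Fin.sum_univ_eq_sum_range (fun k => if 2 * k < p then (1 : ℚ) else -1) p,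
      sum_range_ite_two_mul_lt hodd]
    exact one_ne_zero
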